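/- arXiv:2205.06713 — 3 statements merged into one kernel-verified Lean document; each statement's English description precedes it below -/
import Mathlib

section
/- Let N ≥ 1 and let (T_1, …, T_N) be exchangeable real random variables on a probability space. Fix α ∈ (0,1), let T^{(1)} ≤ … ≤ T^{(N)} be the order statistics of (T_1,…,T_N), let q = N − ⌊Nα⌋, N⁺ = #{i ∈ {1,…,N} : T^{(i)} > T^{(q)}} and N⁰ = #{i ∈ {1,…,N} : T^{(i)} = T^{(q)}}. Define the randomized test function φ = 1 if T_1 > T^{(q)}, φ = (Nα − N⁺)/N⁰ if T_1 = T^{(q)}, and φ = 0 if T_1 < T^{(q)}. Then E[φ] = α. -/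
open MeasureTheory

namespace PermTestAux

variable {N : ℕ}

/-- The `k`-th order statistic of the tuple `t`. -/
noncomputable def Fstat (k : Fin N) (t : Fin N → ℝ) : ℝ := t (Tuple.sort t k)

lemma Fstat_comp_perm (k : Fin N) (σ : Equiv.Perm (Fin N)) (t : Fin N → ℝ) :
    Fstat k (t ∘ σ) = Fstat k t := by
  have h := congrFun (Tuple.comp_perm_comp_sort_eq_comp_sort (f := t) (σ := σ)) k
  simpa [Fstat] using h

lemma measurableSet_sort_fiber (σ : Equiv.Perm (Fin N)) :
    MeasurableSet {t : Fin N → ℝ | Tuple.sort t = σ} := by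
  classical
  have hset : {t : Fin N → ℝ | Tuple.sort t = σ} =
      (⋂ (i : Fin N) (j : Fin N) (_ : i ≤ j), {t : Fin N → ℝ | t (σ i) ≤ t (σ j)}) ∩
      (⋂ (i : Fin N) (j : Fin N) (_ : i < j),
        if σ i < σ j then (Set.univ : Set (Fin N → ℝ)) else {t | t (σ i) ≠ t (σ j)}) := by
    ext t
    simp only [Set.mem_setOf_eq, Set.mem_inter_iff, Set.mem_iInter]
    rw [eq_comm, Tuple.eq_sort_iff]
    constructor
    · rintro ⟨hmono, htie⟩
      refine ⟨fun i j hij => hmono hij, fun i j hij => ?_⟩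
      by_cases h : σ i < σ j
      · simp [h]
      · simp only [h, if_false, Set.mem_setOf_eq]
        intro heq
        exact h (htie i j hij heq)
    · rintro ⟨hmono, htie⟩
      refine ⟨fun i j hij => hmono i j hij, fun i j hij heq => ?_⟩
      by_cases h : σ i < σ j
      · exact h
      · have := htie i j hij
        simp only [h, if_false, Set.mem_setOf_eq] at this
        exact absurd heq this
  rw [hset]
  apply MeasurableSet.inter
  · refine MeasurableSet.iInter fun i => MeasurableSet.iInter fun j =>
      MeasurableSet.iInter fun _ => ?_
    exact measurableSet_le (measurable_pi_apply _) (measurable_pi_apply _)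
  · refine MeasurableSet.iInter fun i => MeasurableSet.iInter fun j =>
      MeasurableSet.iInter fun _ => ?_
    by_cases h : σ i < σ j
    · simp [h]
    · simp only [h, if_false]
      have hm : MeasurableSet {t : Fin N → ℝ | t (σ i) = t (σ j)} :=
        measurableSet_eq_fun (measurable_pi_apply _) (measurable_pi_apply _)
      exact hm.compl

lemma measurable_Fstat (k : Fin N) : Measurable (Fstat (N := N) k) := by
  classical
  have hrep : Fstat (N := N) k = fun t => ∑ σ : Equiv.Perm (Fin N),
      Set.indicator {t : Fin N → ℝ | Tuple.sort t = σ} (fun t => t (σ k)) t := by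
    funext t
    rw [Finset.sum_eq_single (Tuple.sort t)]
    · simp [Fstat, Set.indicator_of_mem, Set.mem_setOf_eq]
    · intro σ _ hσ
      apply Set.indicator_of_notMem
      simp only [Set.mem_setOf_eq]
      exact fun h => hσ h.symm
    · simp
  rw [hrep]
  exact Finset.measurable_sum _ fun σ _ =>
    (measurable_pi_apply _).indicator (measurableSet_sort_fiber σ)

/-- The randomized test function, as a function of the tuple. -/
noncomputable def phiF (α : ℝ) (k i0 : Fin N) (t : Fin N → ℝ) : ℝ :=
  if Fstat k t < t i0 then 1
  else if t i0 = Fstat k t then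
    ((N : ℝ) * α - ({i : Fin N | Fstat k t < t i}.ncard : ℝ)) /
      (({i : Fin N | t i = Fstat k t}.ncard : ℝ))
  else 0

lemma ncard_lt_cast (k : Fin N) (t : Fin N → ℝ) :
    (({i : Fin N | Fstat k t < t i}.ncard : ℝ)) =
      ∑ i : Fin N, if Fstat k t < t i then (1 : ℝ) else 0 := by
  classical
  rw [Set.ncard_eq_toFinset_card', Set.toFinset_setOf, Finset.card_filter]
  push_cast
  simp

lemma ncard_eq_cast (k : Fin N) (t : Fin N → ℝ) :
    (({i : Fin N | t i = Fstat k t}.ncard : ℝ)) =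
      ∑ i : Fin N, if t i = Fstat k t then (1 : ℝ) else 0 := by
  classical
  rw [Set.ncard_eq_toFinset_card', Set.toFinset_setOf, Finset.card_filter]
  push_cast
  simp

lemma measurable_phiF (α : ℝ) (k i0 : Fin N) : Measurable (phiF α k i0) := by
  classical
  unfold phiF
  apply Measurable.ite (measurableSet_lt (measurable_Fstat k) (measurable_pi_apply i0))
    measurable_const
  apply Measurable.ite (measurableSet_eq_fun (measurable_pi_apply i0) (measurable_Fstat k))
    _ measurable_const
  apply Measurable.div
  · apply Measurable.sub measurable_const
    have : (fun t : Fin N → ℝ => (({i : Fin N | Fstat k t < t i}.ncard : ℝ))) =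
        fun t => ∑ i : Fin N, if Fstat k t < t i then (1 : ℝ) else 0 := by
      funext t; exact ncard_lt_cast k t
    rw [this]
    exact Finset.measurable_sum _ fun i _ => Measurable.ite
      (measurableSet_lt (measurable_Fstat k) (measurable_pi_apply i))
      measurable_const measurable_const
  · have : (fun t : Fin N → ℝ => (({i : Fin N | t i = Fstat k t}.ncard : ℝ))) =
        fun t => ∑ i : Fin N, if t i = Fstat k t then (1 : ℝ) else 0 := by
      funext t; exact ncard_eq_cast k t
    rw [this]
    exact Finset.measurable_sum _ fun i _ => Measurable.ite
      (measurableSet_eq_fun (measurable_pi_apply i) (measurable_Fstat k))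
      measurable_const measurable_const

lemma ncard_eq_pos (k : Fin N) (t : Fin N → ℝ) :
    0 < {i : Fin N | t i = Fstat k t}.ncard := by
  rw [Set.ncard_pos (Set.toFinite _)]
  exact ⟨Tuple.sort t k, rfl⟩

lemma ncard_le (s : Set (Fin N)) : (s.ncard : ℝ) ≤ N := by
  have := Set.ncard_le_ncard (Set.subset_univ s) (Set.toFinite _)
  rw [Set.ncard_univ] at this
  simpa using (Nat.cast_le (α := ℝ)).2 this

lemma abs_phiF_le (hN : 1 ≤ N) {α : ℝ} (hα0 : 0 ≤ α) (hα1 : α ≤ 1) (k i0 : Fin N)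
    (t : Fin N → ℝ) : |phiF α k i0 t| ≤ (N : ℝ) := by
  have hN1 : (1 : ℝ) ≤ N := by exact_mod_cast hN
  unfold phiF
  split_ifs with h1 h2
  · simpa using hN1
  · have hd : (1 : ℝ) ≤ (({i : Fin N | t i = Fstat k t}.ncard : ℝ)) := by
      exact_mod_cast ncard_eq_pos k t
    rw [abs_div]
    have habs : |(N : ℝ) * α - ({i : Fin N | Fstat k t < t i}.ncard : ℝ)| ≤ N := by
      rw [abs_le]
      constructor
      · have h1 : ((({i : Fin N | Fstat k t < t i}.ncard : ℝ))) ≤ N := ncard_le _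
        nlinarith
      · have h2 : (0 : ℝ) ≤ (({i : Fin N | Fstat k t < t i}.ncard : ℝ)) := by positivity
        nlinarith [Nat.cast_nonneg (α := ℝ) N]
    have hstep : |(N : ℝ) * α - ({i : Fin N | Fstat k t < t i}.ncard : ℝ)| /
        |(({i : Fin N | t i = Fstat k t}.ncard : ℝ))| ≤
        |(N : ℝ) * α - ({i : Fin N | Fstat k t < t i}.ncard : ℝ)| := by
      apply div_le_self (abs_nonneg _)
      rw [abs_of_nonneg (by positivity)]
      exact hd
    exact hstep.trans habs
  · rw [abs_zero]
    positivity

lemma ncard_preimage_perm (σ : Equiv.Perm (Fin N)) (s : Set (Fin N)) :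
    (σ ⁻¹' s).ncard = s.ncard := by
  have h : σ ⁻¹' s = σ.symm '' s := by
    ext x
    simp [Equiv.eq_symm_apply, eq_comm]
  rw [h, Set.ncard_image_of_injective s σ.symm.injective]

lemma sum_phiF (α : ℝ) (k i0 : Fin N) (t : Fin N → ℝ) :
    ∑ i : Fin N, phiF α k i0 (t ∘ Equiv.swap i0 i) = (N : ℝ) * α := by
  classical
  set c : ℝ := ((N : ℝ) * α - ({j : Fin N | Fstat k t < t j}.ncard : ℝ)) /
      (({j : Fin N | t j = Fstat k t}.ncard : ℝ)) with hc
  have hsummand : ∀ i : Fin N, phiF α k i0 (t ∘ Equiv.swap i0 i) =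
      (if Fstat k t < t i then (1 : ℝ) else 0) +
      (if t i = Fstat k t then c else 0) := by
    intro i
    have h0 : (t ∘ Equiv.swap i0 i) i0 = t i := by simp
    have hP : {j : Fin N | Fstat k t < (t ∘ Equiv.swap i0 i) j}.ncard =
        {j : Fin N | Fstat k t < t j}.ncard :=
      ncard_preimage_perm (Equiv.swap i0 i) {j : Fin N | Fstat k t < t j}
    have hQ : {j : Fin N | (t ∘ Equiv.swap i0 i) j = Fstat k t}.ncard =
        {j : Fin N | t j = Fstat k t}.ncard :=
      ncard_preimage_perm (Equiv.swap i0 i) {j : Fin N | t j = Fstat k t}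
    unfold phiF
    rw [Fstat_comp_perm, hP, hQ, h0, ← hc]
    split_ifs with h1 h2
    · exfalso; rw [h2] at h1; exact lt_irrefl _ h1
    · ring
    · ring
    · ring
  rw [Finset.sum_congr rfl fun i _ => hsummand i, Finset.sum_add_distrib]
  have hA : ∑ i : Fin N, (if Fstat k t < t i then (1 : ℝ) else 0) =
      ({j : Fin N | Fstat k t < t j}.ncard : ℝ) := (ncard_lt_cast k t).symm
  have hB : ∑ i : Fin N, (if t i = Fstat k t then c else 0) =
      c * ({j : Fin N | t j = Fstat k t}.ncard : ℝ) := by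
    rw [ncard_eq_cast k t, Finset.mul_sum]
    refine Finset.sum_congr rfl fun i _ => ?_
    split_ifs <;> ring
  rw [hA, hB, hc]
  have hpos : (({j : Fin N | t j = Fstat k t}.ncard : ℝ)) ≠ 0 := by
    have := ncard_eq_pos k t
    positivity
  rw [div_mul_cancel₀ _ hpos]
  ring

end PermTestAux


open MeasureTheory

/-- **Exactness of the randomized permutation test based on exchangeable statistics**
(Statement 0).  Let `(T_1,…,T_N)` be exchangeable real random variables, `α ∈ (0,1)`,
`q = N − ⌊Nα⌋`, `T^{(q)}` the `q`-th order statistic, `N⁺ = #{i : T_i > T^{(q)}}`,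
`N⁰ = #{i : T_i = T^{(q)}}` (equivalently, counts in terms of the order statistics), and
`φ = 1` if `T_1 > T^{(q)}`, `φ = (Nα − N⁺)/N⁰` if `T_1 = T^{(q)}`, `φ = 0` otherwise.
Then `E[φ] = α`. -/
theorem stmt0 {Ω : Type*} [MeasurableSpace Ω] (μ : Measure Ω) [IsProbabilityMeasure μ]
    (N : ℕ) (hN : 1 ≤ N) (α : ℝ) (hα0 : 0 < α) (hα1 : α < 1)
    (T : Fin N → Ω → ℝ) (hTmeas : ∀ i, Measurable (T i))
    (hexch : ∀ σ : Equiv.Perm (Fin N),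
      Measure.map (fun ω => fun i => T (σ i) ω) μ = Measure.map (fun ω => fun i => T i ω) μ)
    (q : ℕ) (hq : q = N - ⌊(N : ℝ) * α⌋₊)
    (Tq : Ω → ℝ)
    (hTq : ∀ ω, Tq ω = T (Tuple.sort (fun i => T i ω) ⟨q - 1, by
      have h1 : ⌊(N : ℝ) * α⌋₊ ≤ N := Nat.floor_le_of_le (by
        nlinarith [Nat.one_le_iff_ne_zero.mp hN, (Nat.cast_pos (α := ℝ)).2 (Nat.lt_of_lt_of_le Nat.zero_lt_one hN)])
      omega⟩) ω)
    (Nplus Nzero : Ω → ℕ)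
    (hNplus : ∀ ω, Nplus ω = {i : Fin N | Tq ω < T i ω}.ncard)
    (hNzero : ∀ ω, Nzero ω = {i : Fin N | T i ω = Tq ω}.ncard)
    (φ : Ω → ℝ)
    (hφ : ∀ ω, φ ω =
      if Tq ω < T (⟨0, hN⟩ : Fin N) ω then 1
      else if T (⟨0, hN⟩ : Fin N) ω = Tq ω then ((N : ℝ) * α - (Nplus ω : ℝ)) / (Nzero ω : ℝ)
      else 0) :
    ∫ ω, φ ω ∂μ = α := by
  classical
  have hkin : q - 1 < N := by omega
  set k : Fin N := ⟨q - 1, hkin⟩ with hkdef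
  have hk : ∀ ω, Tq ω = PermTestAux.Fstat k (fun j => T j ω) := fun ω => by
    rw [hTq ω]; rfl
  set i0 : Fin N := (⟨0, hN⟩ : Fin N) with hi0
  have hvec : Measurable (fun ω => fun j : Fin N => T j ω) := measurable_pi_iff.mpr hTmeas
  have hφeq : ∀ ω, φ ω = PermTestAux.phiF α k i0 (fun j => T j ω) := by
    intro ω
    rw [hφ ω, hNplus ω, hNzero ω, hk ω]
    rfl
  have hmeasσ : ∀ σ : Equiv.Perm (Fin N), Measurable (fun ω => fun j => T (σ j) ω) :=
    fun σ => measurable_pi_iff.mpr fun j => hTmeas (σ j)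
  have hintσ : ∀ σ : Equiv.Perm (Fin N),
      Integrable (fun ω => PermTestAux.phiF α k i0 (fun j => T (σ j) ω)) μ := by
    intro σ
    refine Integrable.mono' (integrable_const (N : ℝ))
      ((PermTestAux.measurable_phiF α k i0).comp (hmeasσ σ)).aestronglyMeasurable ?_
    filter_upwards with ω
    rw [Real.norm_eq_abs]
    exact PermTestAux.abs_phiF_le hN hα0.le hα1.le k i0 _
  have hintegral : ∀ σ : Equiv.Perm (Fin N),
      ∫ ω, PermTestAux.phiF α k i0 (fun j => T (σ j) ω) ∂μ = ∫ ω, φ ω ∂μ := by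
    intro σ
    have h1 := integral_map (μ := μ) (hmeasσ σ).aemeasurable
      (PermTestAux.measurable_phiF α k i0).aestronglyMeasurable
    have h2 := integral_map (μ := μ) hvec.aemeasurable
      (PermTestAux.measurable_phiF α k i0).aestronglyMeasurable
    rw [← h1, hexch σ, h2]
    exact integral_congr_ae (Filter.Eventually.of_forall fun ω => (hφeq ω).symm)
  have hsum : ∫ ω, (∑ i : Fin N,
      PermTestAux.phiF α k i0 ((fun j => T j ω) ∘ Equiv.swap i0 i)) ∂μ = (N : ℝ) * α := by
    rw [integral_congr_ae (Filter.Eventually.of_forall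
      (fun ω => PermTestAux.sum_phiF α k i0 (fun j => T j ω)))]
    simp
  have hsum2 : ∫ ω, (∑ i : Fin N,
      PermTestAux.phiF α k i0 ((fun j => T j ω) ∘ Equiv.swap i0 i)) ∂μ =
      ∑ i : Fin N, ∫ ω, PermTestAux.phiF α k i0
        (fun j => T (Equiv.swap i0 i j) ω) ∂μ := by
    exact integral_finset_sum _ fun i _ => hintσ (Equiv.swap i0 i)
  have hNne : (N : ℝ) ≠ 0 := by
    have : (0 : ℝ) < N := by exact_mod_cast Nat.lt_of_lt_of_le Nat.zero_lt_one hN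
    exact this.ne'
  have hmain : (N : ℝ) * ∫ ω, φ ω ∂μ = (N : ℝ) * α := by
    rw [← hsum, hsum2, Finset.sum_congr rfl fun i _ => hintegral (Equiv.swap i0 i)]
    rw [Finset.sum_const, Finset.card_univ, Fintype.card_fin, nsmul_eq_mul]
  exact mul_left_cancel₀ hNne hmain
end

section
/- For each n, let Z_{n1},…,Z_{nn} be independent and identically distributed random vectors (with distribution possibly depending on n) whose support is contained in ℕ^p, and suppose E[‖Z_{n1}‖^{2p}] < C₀ < ∞ with C₀ independent of n. Let S_n be the number of distinct values among Z_{n1},…,Z_{nn}. Then S_n / n → 0 almost surely as n → ∞. -/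
/-!
Truncate at level `r` with `n ≤ r ^ (2 * p)`, e.g. `r = ⌈n ^ (1 / (2p))⌉`. Vectors with all
coordinates below `r` take at most `r ^ p = O(√n)` values, so `S_n ≤ r ^ p + N_n` where `N_n`
counts the indices with some coordinate `≥ r`. By Markov's inequality for `‖Z‖^{2p}` each index is
such an outlier with probability `≤ C₀ / n`, and pairwise independence gives
`E[N_n²] ≤ C₀ + C₀²`. Hence `∑ₙ E[(N_n / n)²] < ∞`, so `N_n / n → 0` almost surely.
-/

open MeasureTheory ProbabilityTheory Filter Finset Topology
open scoped Classical ENNReal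

theorem card_image_le_pow_add_card_filter {ι : Type*} [Fintype ι] {p : ℕ} (f : ι → Fin p → ℕ)
    (r : ℕ) : #(univ.image f) ≤ r ^ p + #{i | ∃ j, r ≤ f i j} := by
  calc #(univ.image f)
      ≤ #(Fintype.piFinset fun _ : Fin p => range r) +
          #(({i | ∃ j, r ≤ f i j} : Finset ι).image f) := by
        refine (card_le_card ?_).trans (card_union_le _ _)
        rintro _ hv
        obtain ⟨i, -, rfl⟩ := mem_image.1 hv
        by_cases h : ∃ j, r ≤ f i j
        · exact mem_union_right _ (mem_image_of_mem f (by simpa using h))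
        · push Not at h
          exact mem_union_left _ (by simpa using h)
    _ ≤ r ^ p + #{i | ∃ j, r ≤ f i j} := by
        rw [Fintype.card_piFinset, prod_const, card_range, card_univ, Fintype.card_fin]
        exact Nat.add_le_add_left card_image_le _

theorem pow_two_mul_le_sum_sq_pow {p r : ℕ} {v : Fin p → ℕ} (h : ∃ j, r ≤ v j) :
    (r : ℝ) ^ (2 * p) ≤ (∑ j, (v j : ℝ) ^ 2) ^ p := by
  obtain ⟨j, hj⟩ := h
  rw [pow_mul]
  gcongr
  calc (r : ℝ) ^ 2 ≤ (v j : ℝ) ^ 2 := by gcongr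
    _ ≤ ∑ j, (v j : ℝ) ^ 2 :=
      single_le_sum (f := fun j => (v j : ℝ) ^ 2) (fun j _ => sq_nonneg _) (mem_univ j)

theorem ENNReal.tsum_inv_natCast_succ_sq_ne_top :
    ∑' m : ℕ, (((m + 1 : ℕ) : ℝ≥0∞) ^ 2)⁻¹ ≠ ∞ := by
  have h (m : ℕ) : (((m + 1 : ℕ) : ℝ≥0∞) ^ 2)⁻¹ = ENNReal.ofReal (((m + 1 : ℕ) : ℝ) ^ 2)⁻¹ := by
    rw [ENNReal.ofReal_inv_of_pos (by positivity), ENNReal.ofReal_pow (by positivity),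
      ENNReal.ofReal_natCast]
  simp_rw [h]
  rw [← ENNReal.ofReal_tsum_of_nonneg (fun m => by positivity)
    ((summable_nat_add_iff 1).2 (Real.summable_nat_pow_inv.2 (by norm_num)))]
  exact ENNReal.ofReal_ne_top

theorem tendsto_nhds_zero_of_tendsto_sq {α : Type*} {l : Filter α} {f : α → ℝ}
    (hf : ∀ a, 0 ≤ f a) (h : Tendsto (fun a => f a ^ 2) l (𝓝 0)) : Tendsto f l (𝓝 0) := by
  simpa [Real.sqrt_sq (hf _)] using h.sqrt

theorem exists_le_pow_two_mul_tendsto_pow_div {p : ℕ} (hp : p ≠ 0) :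
    ∃ r : ℕ → ℕ, (∀ n, n ≤ r n ^ (2 * p)) ∧ Tendsto (fun n => (r n : ℝ) ^ p / n) atTop (𝓝 0) := by
  set x : ℕ → ℝ := fun n => (n : ℝ) ^ ((2 * p : ℕ) : ℝ)⁻¹
  have hx (n : ℕ) : x n ^ (2 * p) = n := Real.rpow_inv_natCast_pow n.cast_nonneg (by positivity)
  refine ⟨fun n => ⌈x n⌉₊, fun n => ?_, ?_⟩
  · exact_mod_cast (hx n).symm.le.trans (pow_le_pow_left₀ (by positivity) (Nat.le_ceil _) _)
  have hxp : ∀ n, x n ^ p = √n := fun n => by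
    rw [← hx n, mul_comm, pow_mul, Real.sqrt_sq (by positivity)]
  have hle : ∀ n, 1 ≤ n → (⌈x n⌉₊ : ℝ) ^ p / n ≤ 2 ^ p / √n := fun n hn => by
    have h1 : 1 ≤ x n := Real.one_le_rpow (by exact_mod_cast hn) (by positivity)
    have h2 : (⌈x n⌉₊ : ℝ) ≤ 2 * x n := by linarith [Nat.ceil_lt_add_one (by positivity : 0 ≤ x n)]
    calc (⌈x n⌉₊ : ℝ) ^ p / n ≤ (2 * x n) ^ p / n := by gcongr
      _ = 2 ^ p / √n := by rw [mul_pow, hxp, mul_div_assoc, Real.sqrt_div_self', mul_one_div]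
  refine squeeze_zero' (.of_forall fun n => by positivity) (eventually_atTop.2 ⟨1, hle⟩) ?_
  exact tendsto_const_nhds.div_atTop (Real.tendsto_sqrt_atTop.comp tendsto_natCast_atTop_atTop)

section Probability

variable {Ω : Type*} [MeasurableSpace Ω] {μ : Measure Ω}

theorem measure_exists_le_coord_le_lintegral_div {p : ℕ} {f : Ω → Fin p → ℕ} (hf : Measurable f)
    {n r : ℕ} (hn : n ≠ 0) (hnr : n ≤ r ^ (2 * p)) :
    μ {ω | ∃ j, r ≤ f ω j} ≤ (∫⁻ ω, ENNReal.ofReal ((∑ j, (f ω j : ℝ) ^ 2) ^ p) ∂μ) / n := by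
  set g : Ω → ℝ≥0∞ := fun ω => ENNReal.ofReal ((∑ j, (f ω j : ℝ) ^ 2) ^ p)
  have hg : Measurable g := (measurable_of_countable
    fun v : Fin p → ℕ => ENNReal.ofReal ((∑ j, (v j : ℝ) ^ 2) ^ p)).comp hf
  have hsub : {ω | ∃ j, r ≤ f ω j} ⊆ {ω | (r : ℝ≥0∞) ^ (2 * p) ≤ g ω} := fun ω hω => by
    simpa [g, ← ENNReal.ofReal_natCast, ← ENNReal.ofReal_pow] using
      ENNReal.ofReal_le_ofReal (pow_two_mul_le_sum_sq_pow hω)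
  rw [ENNReal.le_div_iff_mul_le (Or.inl (by exact_mod_cast hn)) (Or.inl (ENNReal.natCast_ne_top n))]
  calc μ {ω | ∃ j, r ≤ f ω j} * n ≤ (r : ℝ≥0∞) ^ (2 * p) * μ {ω | (r : ℝ≥0∞) ^ (2 * p) ≤ g ω} := by
        rw [mul_comm]
        gcongr
        exact_mod_cast hnr
    _ ≤ ∫⁻ ω, g ω ∂μ := mul_meas_ge_le_lintegral₀ hg.aemeasurable _

theorem measurable_card_filter_mem {ι : Type*} [Fintype ι] {A : ι → Set Ω}
    (hA : ∀ i, MeasurableSet (A i)) : Measurable fun ω => #{i | ω ∈ A i} := by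
  simp only [card_filter]
  exact Finset.measurable_sum _ fun i _ => Measurable.ite (hA i) measurable_const measurable_const

theorem lintegral_card_filter_mem_sq_le {ι : Type*} [Fintype ι] {A : ι → Set Ω}
    (hA : ∀ i, MeasurableSet (A i))
    (hind : Pairwise fun i j => μ (A i ∩ A j) = μ (A i) * μ (A j)) :
    ∫⁻ ω, (#{i | ω ∈ A i} : ℝ≥0∞) ^ 2 ∂μ ≤ ∑ i, μ (A i) + (∑ i, μ (A i)) ^ 2 := by
  have hsq (ω : Ω) : (#{i | ω ∈ A i} : ℝ≥0∞) ^ 2 = ∑ i, ∑ j, (A i ∩ A j).indicator 1 ω := by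
    have hcard : (#{i | ω ∈ A i} : ℝ≥0∞) = ∑ i, (A i).indicator 1 ω := by
      simp only [card_filter, Nat.cast_sum, Nat.cast_ite, Nat.cast_one, Nat.cast_zero,
        Set.indicator_apply, Pi.one_apply]
    simp only [hcard, sq, sum_mul_sum, Set.inter_indicator_one, Pi.mul_apply]
  calc ∫⁻ ω, (#{i | ω ∈ A i} : ℝ≥0∞) ^ 2 ∂μ = ∑ i, ∑ j, μ (A i ∩ A j) := by
        simp_rw [hsq]
        rw [lintegral_finsetSum _ fun i _ => Finset.measurable_sum _ fun j _ =>
          measurable_one.indicator ((hA i).inter (hA j))]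
        refine sum_congr rfl fun i _ => ?_
        rw [lintegral_finsetSum _ fun j _ => measurable_one.indicator ((hA i).inter (hA j))]
        simp [lintegral_indicator ((hA _).inter (hA _))]
    _ ≤ ∑ i, ∑ j, ((if i = j then μ (A i) else 0) + μ (A i) * μ (A j)) := by
        gcongr with i _ j _
        by_cases h : i = j
        · subst h
          simp
        · simp [h, hind h]
    _ = ∑ i, μ (A i) + (∑ i, μ (A i)) ^ 2 := by
        simp [sum_add_distrib, sq, sum_mul_sum]

theorem ae_tendsto_div_atTop_zero_of_lintegral_sq_le {N : ℕ → Ω → ℕ} (hN : ∀ n, Measurable (N n))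
    {c : ℝ≥0∞} (hc : c ≠ ∞) (h : ∀ n, ∫⁻ ω, (N n ω : ℝ≥0∞) ^ 2 ∂μ ≤ c) :
    ∀ᵐ ω ∂μ, Tendsto (fun n => (N n ω : ℝ) / n) atTop (𝓝 0) := by
  set X : ℕ → Ω → ℝ≥0∞ := fun m ω => (N (m + 1) ω : ℝ≥0∞) ^ 2 * (((m + 1 : ℕ) : ℝ≥0∞) ^ 2)⁻¹
  have hX : ∀ m, Measurable (X m) := fun m =>
    ((measurable_from_nat.comp (hN (m + 1))).pow_const 2).mul_const _
  have hsum : ∫⁻ ω, ∑' m, X m ω ∂μ ≠ ∞ := by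
    rw [lintegral_tsum fun m => (hX m).aemeasurable]
    refine ne_top_of_le_ne_top (ENNReal.mul_ne_top hc ENNReal.tsum_inv_natCast_succ_sq_ne_top) ?_
    rw [← ENNReal.tsum_mul_left]
    exact ENNReal.tsum_le_tsum fun m => (lintegral_mul_const _
      ((measurable_from_nat.comp (hN (m + 1))).pow_const 2)).trans_le (mul_le_mul_left (h _) _)
  filter_upwards [ae_lt_top (Measurable.tsum hX) hsum] with ω hω
  rw [← tendsto_add_atTop_iff_nat 1]
  refine tendsto_nhds_zero_of_tendsto_sq (fun n => by positivity) ?_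
  have := (ENNReal.tendsto_toReal ENNReal.zero_ne_top).comp
    (ENNReal.tendsto_atTop_zero_of_tsum_ne_top hω.ne)
  simp only [X, Function.comp_def, ENNReal.toReal_mul, ENNReal.toReal_pow, ENNReal.toReal_inv,
    ENNReal.toReal_natCast] at this
  simpa [div_eq_mul_inv, mul_pow, inv_pow] using this

end Probability

theorem stmt2_general {Ω : Type*} [MeasurableSpace Ω] (μ : Measure Ω)
    (p : ℕ) (Z : (n : ℕ) → Fin n → Ω → Fin p → ℕ)
    (hmeas : ∀ n i, Measurable (Z n i))
    (hindep : ∀ n, iIndepFun (Z n) μ)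
    (C₀ : ℝ)
    (hmom : ∀ n (i : Fin n),
      ∫⁻ ω, ENNReal.ofReal ((∑ j, ((Z n i ω j : ℝ)) ^ 2) ^ p) ∂μ < ENNReal.ofReal C₀) :
    ∀ᵐ ω ∂μ, Tendsto
      (fun n => (((Finset.univ.image (fun i : Fin n => Z n i ω)).card : ℝ)) / (n : ℝ))
      atTop (nhds 0) := by
  rcases eq_or_ne p 0 with rfl | hp
  · refine ae_of_all _ fun ω => squeeze_zero (fun n => by positivity) (fun n => ?_)
      tendsto_one_div_atTop_nhds_zero_nat
    gcongr
    exact_mod_cast card_le_one.2 fun a _ b _ => Subsingleton.elim a b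
  obtain ⟨r, hr, hr_lim⟩ := exists_le_pow_two_mul_tendsto_pow_div hp
  set C := ENNReal.ofReal C₀
  have hB (n : ℕ) : MeasurableSet {v : Fin p → ℕ | ∃ j, r n ≤ v j} :=
    (Set.to_countable _).measurableSet
  set A : (n : ℕ) → Fin n → Set Ω := fun n i => Z n i ⁻¹' {v | ∃ j, r n ≤ v j}
  have hA_sum (n : ℕ) : ∑ i, μ (A n i) ≤ C := calc
    ∑ i, μ (A n i) ≤ ∑ _i : Fin n, C / n := sum_le_sum fun i _ =>
      (measure_exists_le_coord_le_lintegral_div (hmeas n i) i.pos.ne' (hr n)).trans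
        (ENNReal.div_le_div_right (hmom n i).le _)
    _ = n * (C / n) := by simp
    _ ≤ C := ENNReal.mul_div_le
  have hN (n : ℕ) : ∫⁻ ω, (#{i | ω ∈ A n i} : ℝ≥0∞) ^ 2 ∂μ ≤ C + C ^ 2 :=
    (lintegral_card_filter_mem_sq_le (fun i => hmeas n i (hB n)) fun i j hij =>
      ((hindep n).indepFun hij).measure_inter_preimage_eq_mul _ _ (hB n) (hB n)).trans
      (add_le_add (hA_sum n) (pow_le_pow_left' (hA_sum n) 2))
  filter_upwards [ae_tendsto_div_atTop_zero_of_lintegral_sq_le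
    (fun n => measurable_card_filter_mem fun i => hmeas n i (hB n)) (by finiteness) hN] with ω hω
  refine squeeze_zero (fun n => by positivity) (fun n => ?_) (by simpa using hr_lim.add hω)
  rw [← add_div]
  gcongr
  exact_mod_cast card_image_le_pow_add_card_filter (fun i => Z n i ω) (r n)

/-- **Negligible number of distinct values** (Statement 2, Lemma 1 of the paper).
For each `n`, let `Z_{n1},…,Z_{nn}` be i.i.d. random vectors (distribution possibly depending
on `n`) supported in `ℕ^p` with `E[‖Z_{n1}‖^{2p}] < C₀ < ∞` uniformly in `n` (here
`‖z‖^{2p} = (Σ_j z_j²)^p` is the `2p`-th power of the Euclidean norm).  If `S_n` denotes the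
number of distinct values among `Z_{n1},…,Z_{nn}`, then `S_n/n → 0` almost surely. -/
theorem stmt2 {Ω : Type*} [MeasurableSpace Ω] (μ : Measure Ω) [IsProbabilityMeasure μ]
    (p : ℕ) (Z : (n : ℕ) → Fin n → Ω → Fin p → ℕ)
    (hmeas : ∀ n i, Measurable (Z n i))
    (hindep : ∀ n, iIndepFun (Z n) μ)
    (hident : ∀ n, ∀ i j : Fin n, Measure.map (Z n i) μ = Measure.map (Z n j) μ)
    (C₀ : ℝ)
    (hmom : ∀ n (i : Fin n),
      ∫⁻ ω, ENNReal.ofReal ((∑ j, ((Z n i ω j : ℝ)) ^ 2) ^ p) ∂μ < ENNReal.ofReal C₀) :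
    ∀ᵐ ω ∂μ, Tendsto
      (fun n => (((Finset.univ.image (fun i : Fin n => Z n i ω)).card : ℝ)) / (n : ℝ))
      atTop (nhds 0) :=
  stmt2_general μ p Z hmeas hindep C₀ hmom
end

section
/- (Linear regression drift identity for the exchangeable pair.) With strata of sizes n_s ≥ 2 summing to n, real numbers b_i^s, c_i^s (1 ≤ i ≤ n_s, 1 ≤ s ≤ 𝒮) satisfying Σ_i b_i^s = Σ_i c_i^s = 0 for each s, set a_{ij}^s = b_i^s c_j^s, σ_n > 0, and T^π = σ_n⁻¹ Σ_{s=1}^{𝒮} Σ_{i=1}^{n_s} a_{iπ(i)}^s for a stratified permutation π. Let π be uniform on 𝕊_n and let π′ be obtained from π by the stratified random-transposition construction (random stratum S^e with P(S^e=s) = (n_s−1)/(n−𝒮), uniformly random ordered pair (I,J) of distinct indices in that stratum, and π′ = π composed with the transposition (I,J)). Then E[T^{π′} − T^π | π] = −λ T^π, where λ = 2/(n − 𝒮). -/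
open Finset
open scoped Classical

/-- Size of stratum `s` for the stratum-assignment map `C`. -/
noncomputable def strataSize {n S : ℕ} (C : Fin n → Fin S) (s : Fin S) : ℕ :=
  (Finset.univ.filter fun i => C i = s).card

/-- The linear permutation statistic `T^π = σ⁻¹ Σ_i b_i c_{π(i)}`. -/
noncomputable def Tstat {n : ℕ} (σ : ℝ) (b c : Fin n → ℝ) (g : Equiv.Perm (Fin n)) : ℝ :=
  σ⁻¹ * ∑ i, b i * c (g i)

/-
Swapping `i` and `j` changes `Σ_k b_k c_{π(k)}` only in the two terms `k = i, j`. Summing these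
changes over ordered pairs in a stratum `F` of size `m`, the cross terms factor through
`Σ_F b = Σ_F c∘π = 0`, leaving `-2m Σ_F b_k c_{π(k)}`. The weights `(m-1)/(n-𝒮) · 1/(m(m-1))`
turn this into `-2/(n-𝒮)` times the contribution of `F` to `σ T^π`.
-/

section

variable {n : ℕ} (σ : ℝ) (b c : Fin n → ℝ) (g : Equiv.Perm (Fin n))

theorem Tstat_mul_swap_sub (i j : Fin n) :
    Tstat σ b c (g * Equiv.swap i j) - Tstat σ b c g
      = σ⁻¹ * (b i * c (g j) + b j * c (g i) - b i * c (g i) - b j * c (g j)) := by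
  by_cases hij : i = j
  · subst hij
    simp [← Equiv.Perm.one_def]
  rw [Tstat, Tstat, ← mul_sub, ← sum_sub_distrib,
    Fintype.sum_eq_add i j hij fun k ⟨hki, hkj⟩ => by simp [Equiv.swap_apply_of_ne_of_ne hki hkj]]
  simp only [Equiv.Perm.mul_apply, Equiv.swap_apply_left, Equiv.swap_apply_right]
  ring

theorem sum_sum_Tstat_mul_swap_sub {F : Finset (Fin n)} (hb : ∑ i ∈ F, b i = 0)
    (hc : ∑ i ∈ F, c (g i) = 0) :
    ∑ i ∈ F, ∑ j ∈ F, (if i = j then 0 else Tstat σ b c (g * Equiv.swap i j) - Tstat σ b c g)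
      = -(2 * #F) * (σ⁻¹ * ∑ i ∈ F, b i * c (g i)) := by
  have hterm : ∀ i j,
      (if i = j then 0 else Tstat σ b c (g * Equiv.swap i j) - Tstat σ b c g)
        = σ⁻¹ * (b i * c (g j) + b j * c (g i) - b i * c (g i) - b j * c (g j)) := by
    intro i j
    split_ifs with hij
    · subst hij
      ring
    · exact Tstat_mul_swap_sub σ b c g i j
  have hinner : ∀ i ∈ F,
      ∑ j ∈ F, (b i * c (g j) + b j * c (g i) - b i * c (g i) - b j * c (g j))
        = -(#F * (b i * c (g i))) - ∑ j ∈ F, b j * c (g j) := by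
    intro i _
    rw [sum_sub_distrib, sum_sub_distrib, sum_add_distrib, ← mul_sum, hc, ← sum_mul, hb,
      sum_const, nsmul_eq_mul]
    ring
  simp only [hterm, ← mul_sum]
  rw [sum_congr rfl hinner, sum_sub_distrib, sum_neg_distrib, ← mul_sum, sum_const, nsmul_eq_mul]
  ring

end

theorem sum_filter_comp_eq_of_preserves {n S : ℕ} {C : Fin n → Fin S} {g : Equiv.Perm (Fin n)}
    (hg : ∀ i, C (g i) = C i) (c : Fin n → ℝ) (s : Fin S) :
    ∑ i ∈ univ.filter (fun i => C i = s), c (g i) = ∑ i ∈ univ.filter (fun i => C i = s), c i :=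
  sum_equiv g (by simp [hg]) (fun _ _ => rfl)

theorem stratum_weight_mul {m x y : ℝ} (hm : 2 ≤ m) :
    ((m - 1) / x) * (m * (m - 1))⁻¹ * (-(2 * m) * y) = -(2 / x) * y := by
  have h1 : m ≠ 0 := by linarith
  have h2 : m - 1 ≠ 0 := by linarith
  field_simp

theorem stmt16_general (n S : ℕ) (C : Fin n → Fin S)
    (hsize : ∀ s, 2 ≤ strataSize C s)
    (b c : Fin n → ℝ)
    (hb : ∀ s, ∑ i ∈ Finset.univ.filter (fun i => C i = s), b i = 0)
    (hc : ∀ s, ∑ i ∈ Finset.univ.filter (fun i => C i = s), c i = 0)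
    (σ : ℝ)
    (g : Equiv.Perm (Fin n)) (hg : ∀ i, C (g i) = C i) :
    ∑ s : Fin S,
        (((strataSize C s : ℝ) - 1) / ((n : ℝ) - (S : ℝ))) *
          ((strataSize C s : ℝ) * ((strataSize C s : ℝ) - 1))⁻¹ *
          (∑ i ∈ Finset.univ.filter (fun i => C i = s),
            ∑ j ∈ Finset.univ.filter (fun j => C j = s),
              (if i = j then 0 else
                Tstat σ b c (g * Equiv.swap i j) - Tstat σ b c g))
      = -(2 / ((n : ℝ) - (S : ℝ))) * Tstat σ b c g := by
  have hstratum : ∀ s : Fin S,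
      (((strataSize C s : ℝ) - 1) / ((n : ℝ) - (S : ℝ))) *
          ((strataSize C s : ℝ) * ((strataSize C s : ℝ) - 1))⁻¹ *
          (∑ i ∈ univ.filter (fun i => C i = s), ∑ j ∈ univ.filter (fun j => C j = s),
              (if i = j then 0 else Tstat σ b c (g * Equiv.swap i j) - Tstat σ b c g))
        = -(2 / ((n : ℝ) - (S : ℝ))) *
            (σ⁻¹ * ∑ i ∈ univ.filter (fun i => C i = s), b i * c (g i)) := by
    intro s
    rw [sum_sum_Tstat_mul_swap_sub σ b c g (hb s)
      ((sum_filter_comp_eq_of_preserves hg c s).trans (hc s))]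
    exact stratum_weight_mul (by exact_mod_cast hsize s : (2 : ℝ) ≤ strataSize C s)
  rw [sum_congr rfl fun s _ => hstratum s, ← mul_sum, ← mul_sum,
    sum_fiberwise univ C fun i => b i * c (g i)]
  rfl

/-- **Linear regression (drift) identity for the Stein exchangeable pair** (Statement 16).
With strata of sizes `n_s ≥ 2`, arrays `b, c` with vanishing within-stratum sums, `σ_n > 0` and
`T^π = σ_n⁻¹ Σ_i b_i c_{π(i)}`, the stratified random-transposition construction (stratum `S^e`
drawn with probability `(n_s−1)/(n−𝒮)`, then a uniformly random ordered pair `(I,J)` of distinct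
indices in that stratum, and `π′ = π ∘ (I,J)`) satisfies
`E[T^{π′} − T^π | π] = −λ T^π` with `λ = 2/(n − 𝒮)`, for every stratified permutation `π`. -/
theorem stmt16 (n S : ℕ) (hS : 1 ≤ S) (C : Fin n → Fin S)
    (hsize : ∀ s, 2 ≤ strataSize C s)
    (b c : Fin n → ℝ)
    (hb : ∀ s, ∑ i ∈ Finset.univ.filter (fun i => C i = s), b i = 0)
    (hc : ∀ s, ∑ i ∈ Finset.univ.filter (fun i => C i = s), c i = 0)
    (σ : ℝ) (hσ : 0 < σ)
    (g : Equiv.Perm (Fin n)) (hg : ∀ i, C (g i) = C i) :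
    ∑ s : Fin S,
        (((strataSize C s : ℝ) - 1) / ((n : ℝ) - (S : ℝ))) *
          ((strataSize C s : ℝ) * ((strataSize C s : ℝ) - 1))⁻¹ *
          (∑ i ∈ Finset.univ.filter (fun i => C i = s),
            ∑ j ∈ Finset.univ.filter (fun j => C j = s),
              (if i = j then 0 else
                Tstat σ b c (g * Equiv.swap i j) - Tstat σ b c g))
      = -(2 / ((n : ℝ) - (S : ℝ))) * Tstat σ b c g :=
  stmt16_general n S C hsize b c hb hc σ g hg
end
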